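/- Let R be a set, n ≥ 2, and g : R^n → R an associative n-ary operation with an identity element 1 ∈ R, i.e., g(1,…,1,a,1,…,1) = a whenever a occupies any single position i (1 ≤ i ≤ n) and all other n−1 arguments equal 1. Then for all a_2,…,a_n ∈ R and all 1 ≤ i < j ≤ n, g(a_2,…,a_i, 1, a_{i+1},…,a_n) = g(a_2,…,a_j, 1, a_{j+1},…,a_n); that is, the value of g applied to the n−1 elements a_2,…,a_n together with one occurrence of 1 does not depend on the position at which 1 is inserted. -/

import Mathlib

/-- `f` is an associative `m`-ary operation: with indices 0-based, the sequence
`a 0, …, a (2*m-2)` plays the role of `a_1, …, a_{2m-1}`, and for all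
`0 ≤ i < j ≤ m-1` the two ways of nesting `f` agree. -/
def NAryAssoc {R : Type*} {m : ℕ} (f : (Fin m → R) → R) : Prop :=
  ∀ (a : ℕ → R) (i j : ℕ), i < j → j < m →
    f (fun k : Fin m => if (k : ℕ) < i then a k
        else if (k : ℕ) = i then f (fun t : Fin m => a (i + (t : ℕ)))
        else a ((k : ℕ) + m - 1)) =
    f (fun k : Fin m => if (k : ℕ) < j then a k
        else if (k : ℕ) = j then f (fun t : Fin m => a (j + (t : ℕ)))
        else a ((k : ℕ) + m - 1))

/-- The `n`-ary operation `g` is distributive in its first argument with respect to the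
`m`-ary operation `f`:
`g(f(a_1,…,a_m), b_2,…,b_n) = f(g(a_1,b_2,…,b_n), …, g(a_m,b_2,…,b_n))`. -/
def FirstDistrib {R : Type*} {m n : ℕ} (f : (Fin m → R) → R) (g : (Fin n → R) → R) : Prop :=
  ∀ (a : Fin m → R) (b : Fin n → R),
    g (fun k : Fin n => if (k : ℕ) = 0 then f a else b k) =
    f (fun i : Fin m => g (fun k : Fin n => if (k : ℕ) = 0 then a i else b k))

/-- `e` is an identity (unity) for the `n`-ary operation `g`:
`g(e^{i-1}, a, e^{n-i}) = a` for every position `i`. -/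
def NAryIdentity {R : Type*} {n : ℕ} (g : (Fin n → R) → R) (e : R) : Prop :=
  ∀ (a : R) (i : Fin n), g (fun k : Fin n => if k = i then a else e) = a

/-- The argument tuple `(x, y, e^{n-2})`. -/
def pairArgs {R : Type*} {n : ℕ} (e x y : R) : Fin n → R :=
  fun k : Fin n => if (k : ℕ) = 0 then x else if (k : ℕ) = 1 then y else e

/-! The swap of `1` with a neighbouring argument `x` comes from associativity applied to the word
`a_0 ⋯ a_{i-1} 1^{n-1} x 1 a_{i+1} ⋯`: bracketing its `n` letters from position `i` gives
`g(1^{n-1}, x) = x`, bracketing from position `i+1` gives `g(1^{n-2}, x, 1) = x`, and the two outer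
words are the argument lists with `1` at positions `i+1` and `i`. Adjacent swaps then move `1`
anywhere. -/

def withOneAt {R : Type*} {n : ℕ} (one : R) (a : ℕ → R) (p : ℕ) : Fin n → R :=
  fun k : Fin n => if (k : ℕ) < p then a k else if (k : ℕ) = p then one else a ((k : ℕ) - 1)

section

variable {R : Type*} {n : ℕ} {g : (Fin n → R) → R} {one : R}

theorem NAryIdentity.apply_eq_of_forall_ne (hone : NAryIdentity g one) {v : Fin n → R}
    (q : Fin n) (hv : ∀ k, k ≠ q → v k = one) : g v = v q := by
  have hv' : v = fun k => if k = q then v q else one := by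
    funext k
    split_ifs with hk
    · rw [hk]
    · exact hv k hk
  conv_lhs => rw [hv']
  exact hone (v q) q

theorem apply_withOneAt_succ (hg : NAryAssoc g) (hone : NAryIdentity g one) (a : ℕ → R)
    {i : ℕ} (hi : i + 1 < n) :
    g (withOneAt one a (i + 1)) = g (withOneAt one a i) := by
  let c : ℕ → R := fun k => if k < i then a k else if k < i + n - 1 then one
    else if k = i + n - 1 then a i else if k = i + n then one else a (k - n)
  have inner_at_i : g (fun t : Fin n => c (i + t)) = a i := by
    rw [hone.apply_eq_of_forall_ne ⟨n - 1, by omega⟩]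
    · simp only [c]
      split_ifs <;> first | rfl | omega
    · intro t ht
      simp only [ne_eq, Fin.ext_iff] at ht
      simp only [c]
      split_ifs <;> first | rfl | omega
  have inner_at_succ : g (fun t : Fin n => c (i + 1 + t)) = a i := by
    rw [hone.apply_eq_of_forall_ne ⟨n - 2, by omega⟩]
    · simp only [c]
      split_ifs <;> first | rfl | omega
    · intro t ht
      simp only [ne_eq, Fin.ext_iff] at ht
      simp only [c]
      split_ifs <;> first | rfl | omega
  have h := hg c i (i + 1) i.lt_succ_self hi
  rw [inner_at_i, inner_at_succ] at h
  convert h using 2 <;> funext ⟨k, hk⟩ <;> simp only [withOneAt, c] <;>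
    split_ifs <;> first | rfl | omega | (congr 1 <;> omega)

end

/-- Here `a 0, …, a (n-2)` play the role of `a_2, …, a_n`, and `i < j ≤ n-1` are the 0-based
insertion positions of `1`. -/
theorem identity_position_irrelevant_general {R : Type*} {n : ℕ}
    (g : (Fin n → R) → R) (hg : NAryAssoc g)
    (one : R) (hone : NAryIdentity g one)
    (a : ℕ → R) (i j : ℕ) (hij : i < j) (hj : j < n) :
    g (fun k : Fin n => if (k : ℕ) < i then a k
        else if (k : ℕ) = i then one else a ((k : ℕ) - 1)) =
    g (fun k : Fin n => if (k : ℕ) < j then a k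
        else if (k : ℕ) = j then one else a ((k : ℕ) - 1)) := by
  change g (withOneAt one a i) = g (withOneAt one a j)
  induction j, hij using Nat.le_induction with
  | base => exact (apply_withOneAt_succ hg hone a hj).symm
  | succ m _ ih => exact (ih (by omega)).trans (apply_withOneAt_succ hg hone a hj).symm

/-- In an associative `n`-ary operation with unity `1`, the value of `g` applied to the
`n-1` elements `a_2, …, a_n` together with one occurrence of `1` does not depend on the
position at which `1` is inserted. Here `a 0, …, a (n-2)` play the role of `a_2, …, a_n`,
and `i, j` (with `i < j ≤ n-1`) are the 0-based insertion positions of `1`. -/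
theorem identity_position_irrelevant {R : Type*} {n : ℕ} (hn : 2 ≤ n)
    (g : (Fin n → R) → R) (hg : NAryAssoc g)
    (one : R) (hone : NAryIdentity g one)
    (a : ℕ → R) (i j : ℕ) (hij : i < j) (hj : j < n) :
    g (fun k : Fin n => if (k : ℕ) < i then a k
        else if (k : ℕ) = i then one else a ((k : ℕ) - 1)) =
    g (fun k : Fin n => if (k : ℕ) < j then a k
        else if (k : ℕ) = j then one else a ((k : ℕ) - 1)) :=
  identity_position_irrelevant_general g hg one hone a i j hij hj
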